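/- arXiv:2501.07561 — 3 statements merged into one kernel-verified Lean document; each statement's English description precedes it below -/
import Mathlib

section
/- Let M_s, M_r, D, Z be random variables on a probability space taking values in finite nonempty types 𝓜s, 𝓜r, 𝓓, 𝓩 respectively. Assume: (i) M_s is uniformly distributed on 𝓜s, M_r is uniformly distributed on 𝓜r, and M_s and M_r are independent; (ii) D = f(M_s, M_r) almost surely for some function f : 𝓜s × 𝓜r → 𝓓; (iii) M_r = g(D) almost surely for some function g : 𝓓 → 𝓜r; (iv) the pair (M_s, M_r) is conditionally independent of Z given D; (v) there is ε ∈ [0,1] with H(M_r | (M_s, Z)) ≤ log 2 + ε · log |𝓜r|. Then I(M_s; Z) ≤ I(D; Z) − (1 − ε) · log |𝓜r| + log 2. -/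
open MeasureTheory ProbabilityTheory Real

/-- Shannon entropy (natural logarithm) of a random variable with values in a finite type. -/
noncomputable def Hent {Ω : Type*} [MeasurableSpace Ω] (μ : Measure Ω)
    {α : Type*} [Fintype α] (X : Ω → α) : ℝ :=
  ∑ a : α, Real.negMulLog (μ (X ⁻¹' {a})).toReal

/-- Conditional Shannon entropy `H(X | Y) = H(X, Y) - H(Y)`. -/
noncomputable def Hcond {Ω : Type*} [MeasurableSpace Ω] (μ : Measure Ω)
    {α β : Type*} [Fintype α] [Fintype β] (X : Ω → α) (Y : Ω → β) : ℝ :=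
  Hent μ (fun ω => (X ω, Y ω)) - Hent μ Y

/-- Mutual information `I(X; Y) = H(X) + H(Y) - H(X, Y)`. -/
noncomputable def MutInf {Ω : Type*} [MeasurableSpace Ω] (μ : Measure Ω)
    {α β : Type*} [Fintype α] [Fintype β] (X : Ω → α) (Y : Ω → β) : ℝ :=
  Hent μ X + Hent μ Y - Hent μ (fun ω => (X ω, Y ω))

/-!
Three ingredients. Since `(Ms, Mr) – D – Z` is a Markov chain, the data processing inequality
gives `I(Ms, Mr; Z) ≤ I(D; Z)`: for a Markov chain `X – Y – Z` one has `I(X; Z | Y) = 0`, while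
`I(Y; Z | X) ≥ 0`, and expanding both in entropies leaves `I(X; Z) ≤ I(Y; Z)`. Both facts come from
writing `I(X; Z | Y)` as a sum over `y` of the mutual information of the unnormalised weights
`P(X = x, Z = z, Y = y)`, which is nonnegative by `log t ≤ t - 1` and vanishes when the weights
factorise. Independence and uniformity of `Mr` give `H(Ms, Mr) = H(Ms) + log |𝓜r|`, and the
Fano hypothesis reads `H(Ms, Mr, Z) ≤ H(Ms, Z) + log 2 + ε log |𝓜r|`. Combining the three gives the
bound.
-/

section Weights

variable {α γ : Type*} [Fintype α] [Fintype γ]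

/-- For weights `r = s • p` with `p` a probability law on `α × γ`, this is `s * I(p)`; the last
term corrects for the normalisation. -/
noncomputable def weightMutInf (r : α → γ → ℝ) : ℝ :=
  ∑ x, negMulLog (∑ z, r x z) + ∑ z, negMulLog (∑ x, r x z)
    - ∑ x, ∑ z, negMulLog (r x z) - negMulLog (∑ x, ∑ z, r x z)

lemma weightMutInf_eq_sum_mul_log (r : α → γ → ℝ) :
    weightMutInf r = ∑ x, ∑ z, r x z * (log (r x z) + log (∑ x', ∑ z', r x' z')
      - log (∑ z', r x z') - log (∑ x', r x' z)) := by
  simp only [weightMutInf, negMulLog, neg_mul, mul_add, mul_sub, Finset.sum_add_distrib,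
    Finset.sum_sub_distrib, Finset.sum_neg_distrib, ← Finset.sum_mul]
  rw [Finset.sum_comm (f := fun x z => r x z * log (∑ x', r x' z))]
  simp only [← Finset.sum_mul]
  ring

lemma sub_mul_div_le_mul_log_add_log_sub_log_sub_log {r s u v : ℝ} (hr : 0 ≤ r) (hru : r ≤ u)
    (hrv : r ≤ v) (hus : u ≤ s) : r - u * v / s ≤ r * (log r + log s - log u - log v) := by
  rcases hr.eq_or_lt with rfl | hr
  · simpa using div_nonneg (mul_nonneg hru hrv) (hru.trans hus)
  have hu : 0 < u := hr.trans_le hru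
  have hv : 0 < v := hr.trans_le hrv
  have hs : 0 < s := hu.trans_le hus
  have hlog : log r + log s - log u - log v = -log (u * v / (r * s)) := by
    rw [log_div (by positivity) (by positivity), log_mul hu.ne' hv.ne',
      log_mul hr.ne' hs.ne']
    ring
  rw [hlog]
  have := log_le_sub_one_of_pos (show 0 < u * v / (r * s) by positivity)
  calc r - u * v / s = r * (1 - u * v / (r * s)) := by field_simp
    _ ≤ r * -log (u * v / (r * s)) := by gcongr; linarith

lemma weightMutInf_nonneg {r : α → γ → ℝ} (hr : ∀ x z, 0 ≤ r x z) : 0 ≤ weightMutInf r := by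
  set s := ∑ x, ∑ z, r x z
  have hrow : ∑ x, ∑ z, r x z = s := rfl
  have hcol : ∑ z, ∑ x, r x z = s := Finset.sum_comm
  have hbound : ∀ x z, r x z - (∑ z', r x z') * (∑ x', r x' z) / s
      ≤ r x z * (log (r x z) + log s - log (∑ z', r x z') - log (∑ x', r x' z)) := by
    intro x z
    refine sub_mul_div_le_mul_log_add_log_sub_log_sub_log (hr x z) ?_ ?_ ?_
    · exact Finset.single_le_sum (fun z' _ => hr x z') (Finset.mem_univ z)
    · exact Finset.single_le_sum (fun x' _ => hr x' z) (Finset.mem_univ x)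
    · exact Finset.single_le_sum (f := fun x' => ∑ z', r x' z')
        (fun x' _ => Finset.sum_nonneg fun z' _ => hr x' z') (Finset.mem_univ x)
  calc (0 : ℝ) = s - s * s / s := by rw [mul_self_div_self, sub_self]
    _ = ∑ x, ∑ z, (r x z - (∑ z', r x z') * (∑ x', r x' z) / s) := by
      simp only [Finset.sum_sub_distrib, ← Finset.sum_div, ← Finset.mul_sum, ← Finset.sum_mul,
        hrow, hcol]
    _ ≤ weightMutInf r := by
      rw [weightMutInf_eq_sum_mul_log]
      exact Finset.sum_le_sum fun x _ => Finset.sum_le_sum fun z _ => hbound x z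

lemma weightMutInf_eq_zero {r : α → γ → ℝ} (hr : ∀ x z, 0 ≤ r x z)
    (h : ∀ x z, r x z * ∑ x', ∑ z', r x' z' = (∑ z', r x z') * ∑ x', r x' z) :
    weightMutInf r = 0 := by
  rw [weightMutInf_eq_sum_mul_log]
  refine Finset.sum_eq_zero fun x _ => Finset.sum_eq_zero fun z _ => ?_
  rcases (hr x z).eq_or_lt with h0 | hpos
  · rw [← h0, zero_mul]
  have hs : 0 < ∑ x', ∑ z', r x' z' := hpos.trans_le <|
    (Finset.single_le_sum (fun z' _ => hr x z') (Finset.mem_univ z)).trans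
      (Finset.single_le_sum (f := fun x' => ∑ z', r x' z')
        (fun x' _ => Finset.sum_nonneg fun z' _ => hr x' z') (Finset.mem_univ x))
  have huv := h x z ▸ mul_ne_zero hpos.ne' hs.ne'
  have hlog : log (r x z) + log (∑ x', ∑ z', r x' z') - log (∑ z', r x z') - log (∑ x', r x' z)
      = log (r x z * ∑ x', ∑ z', r x' z') - log ((∑ z', r x z') * ∑ x', r x' z) := by
    rw [log_mul hpos.ne' hs.ne', log_mul (left_ne_zero_of_mul huv) (right_ne_zero_of_mul huv)]
    ring
  rw [hlog, h, sub_self, mul_zero]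

end Weights

section Entropy

variable {Ω : Type*} [MeasurableSpace Ω] (μ : Measure Ω) {α β : Type*} [Fintype α] [Fintype β]

lemma Hent_comp_equiv (e : α ≃ β) (X : Ω → α) : Hent μ (fun ω => e (X ω)) = Hent μ X := by
  rw [Hent, Hent, ← e.sum_comp]
  have hfiber : ∀ a, (fun ω => e (X ω)) ⁻¹' {e a} = X ⁻¹' {a} := fun a => by
    ext ω; simp
  simp only [hfiber]

lemma Hent_prod_comm (X : Ω → α) (Y : Ω → β) :
    Hent μ (fun ω => (X ω, Y ω)) = Hent μ (fun ω => (Y ω, X ω)) :=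
  Hent_comp_equiv μ (Equiv.prodComm β α) fun ω => (Y ω, X ω)

lemma Hent_pair_eq_sum (X : Ω → α) (Y : Ω → β) :
    Hent μ (fun ω => (X ω, Y ω)) = ∑ x, ∑ y, negMulLog (μ.real (X ⁻¹' {x} ∩ Y ⁻¹' {y})) := by
  simp only [Hent, Fintype.sum_prod_type, ← Set.singleton_prod_singleton, Set.mk_preimage_prod]
  rfl

lemma Hent_of_uniform {X : Ω → α} (h : ∀ a, μ (X ⁻¹' {a}) = (Fintype.card α : ENNReal)⁻¹) :
    Hent μ X = log (Fintype.card α) := by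
  rcases eq_or_ne (Fintype.card α) 0 with hα | hα
  · simp [Hent, Fintype.card_eq_zero_iff.mp hα]
  simp only [Hent, h, ENNReal.toReal_inv, ENNReal.toReal_natCast, Finset.sum_const,
    Finset.card_univ, nsmul_eq_mul, negMulLog, log_inv]
  field_simp

variable [MeasurableSpace α] [MeasurableSingletonClass α] [MeasurableSpace β]
  [MeasurableSingletonClass β]

lemma sum_measureReal_preimage_inter [IsFiniteMeasure μ] {V : Ω → β} (hV : Measurable V)
    (T : Set Ω) : ∑ b, μ.real (V ⁻¹' {b} ∩ T) = μ.real T := by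
  rw [← measureReal_restrict_apply_univ, ← Set.preimage_univ (f := V), ← Finset.coe_univ,
    ← sum_measureReal_preimage_singleton _ fun b _ => hV (measurableSet_singleton b)]
  simp only [measureReal_restrict_apply (hV (measurableSet_singleton _))]

lemma sum_measureReal_inter_preimage_inter [IsFiniteMeasure μ] {V : Ω → β} (hV : Measurable V)
    (S T : Set Ω) : ∑ b, μ.real (S ∩ V ⁻¹' {b} ∩ T) = μ.real (S ∩ T) := by
  rw [← sum_measureReal_preimage_inter μ hV]
  exact Finset.sum_congr rfl fun b _ => by rw [Set.inter_assoc, Set.inter_left_comm]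

lemma sum_measureReal_preimage_inter_inter [IsFiniteMeasure μ] {V : Ω → β} (hV : Measurable V)
    (S T : Set Ω) : ∑ b, μ.real (V ⁻¹' {b} ∩ S ∩ T) = μ.real (S ∩ T) := by
  simp_rw [Set.inter_assoc]
  exact sum_measureReal_preimage_inter μ hV _

lemma sum_measureReal_preimage [IsProbabilityMeasure μ] {X : Ω → α} (hX : Measurable X) :
    ∑ a, μ.real (X ⁻¹' {a}) = 1 := by
  simpa using sum_measureReal_preimage_inter μ hX Set.univ

lemma Hent_pair_of_indepFun [IsProbabilityMeasure μ] {X : Ω → α} {Y : Ω → β}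
    (hX : Measurable X) (hY : Measurable Y) (hXY : IndepFun X Y μ) :
    Hent μ (fun ω => (X ω, Y ω)) = Hent μ X + Hent μ Y := by
  have hmul : ∀ x y, μ.real (X ⁻¹' {x} ∩ Y ⁻¹' {y}) = μ.real (X ⁻¹' {x}) * μ.real (Y ⁻¹' {y}) :=
    fun x y => by
      simp only [measureReal_def, hXY.measure_inter_preimage_eq_mul _ _
        (measurableSet_singleton x) (measurableSet_singleton y), ENNReal.toReal_mul]
  simp only [Hent_pair_eq_sum, hmul, negMulLog_mul, Finset.sum_add_distrib, ← Finset.sum_mul,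
    ← Finset.mul_sum, sum_measureReal_preimage μ hX, sum_measureReal_preimage μ hY]
  simp [Hent, measureReal_def]

end Entropy

section ConditionalMutualInformation

variable {Ω : Type*} [MeasurableSpace Ω] (μ : Measure Ω) {α β γ : Type*}
  [Fintype α] [Fintype β] [Fintype γ]

noncomputable def CondMutInf (X : Ω → α) (Z : Ω → γ) (Y : Ω → β) : ℝ :=
  Hcond μ X Y + Hcond μ Z Y - Hcond μ (fun ω => (X ω, Z ω)) Y

def IsMarkovChain (X : Ω → α) (Y : Ω → β) (Z : Ω → γ) : Prop :=
  ∀ x z y, μ (Y ⁻¹' {y}) * μ {ω | X ω = x ∧ Z ω = z ∧ Y ω = y}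
    = μ {ω | X ω = x ∧ Y ω = y} * μ {ω | Z ω = z ∧ Y ω = y}

variable [MeasurableSpace α] [MeasurableSingletonClass α] [MeasurableSpace γ]
  [MeasurableSingletonClass γ] [IsFiniteMeasure μ] {X : Ω → α} {Y : Ω → β} {Z : Ω → γ}

lemma condMutInf_eq_sum_weightMutInf (hX : Measurable X) (hZ : Measurable Z) :
    CondMutInf μ X Z Y
      = ∑ y, weightMutInf fun x z => μ.real (X ⁻¹' {x} ∩ Z ⁻¹' {z} ∩ Y ⁻¹' {y}) := by
  have hXZY : Hent μ (fun ω => ((X ω, Z ω), Y ω))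
      = ∑ x, ∑ z, ∑ y, negMulLog (μ.real (X ⁻¹' {x} ∩ Z ⁻¹' {z} ∩ Y ⁻¹' {y})) := by
    simp only [Hent_pair_eq_sum, Fintype.sum_prod_type, ← Set.singleton_prod_singleton,
      Set.mk_preimage_prod]
  have hY : Hent μ Y = ∑ y, negMulLog (μ.real (Y ⁻¹' {y})) := rfl
  simp only [CondMutInf, Hcond, hXZY, Hent_pair_eq_sum, hY, weightMutInf,
    sum_measureReal_inter_preimage_inter μ hZ, sum_measureReal_preimage_inter_inter μ hX,
    sum_measureReal_preimage_inter μ hX, Finset.sum_add_distrib, Finset.sum_sub_distrib]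
  rw [Finset.sum_comm (f := fun x y => negMulLog (μ.real (X ⁻¹' {x} ∩ Y ⁻¹' {y}))),
    Finset.sum_comm (f := fun z y => negMulLog (μ.real (Z ⁻¹' {z} ∩ Y ⁻¹' {y}))),
    Finset.sum_congr rfl fun x _ =>
      Finset.sum_comm (f := fun z y => negMulLog (μ.real (X ⁻¹' {x} ∩ Z ⁻¹' {z} ∩ Y ⁻¹' {y}))),
    Finset.sum_comm (f := fun x y => ∑ z, negMulLog (μ.real (X ⁻¹' {x} ∩ Z ⁻¹' {z} ∩ Y ⁻¹' {y})))]
  ring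

lemma condMutInf_nonneg (hX : Measurable X) (hZ : Measurable Z) : 0 ≤ CondMutInf μ X Z Y := by
  rw [condMutInf_eq_sum_weightMutInf μ hX hZ]
  exact Finset.sum_nonneg fun y _ => weightMutInf_nonneg fun x z => measureReal_nonneg

lemma condMutInf_eq_zero_of_isMarkovChain (hX : Measurable X) (hZ : Measurable Z)
    (h : IsMarkovChain μ X Y Z) : CondMutInf μ X Z Y = 0 := by
  rw [condMutInf_eq_sum_weightMutInf μ hX hZ]
  refine Finset.sum_eq_zero fun y _ => weightMutInf_eq_zero (fun x z => measureReal_nonneg)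
    fun x z => ?_
  simp only [sum_measureReal_inter_preimage_inter μ hZ, sum_measureReal_preimage_inter_inter μ hX,
    sum_measureReal_preimage_inter μ hX]
  have hsets : {ω | X ω = x ∧ Z ω = z ∧ Y ω = y} = X ⁻¹' {x} ∩ Z ⁻¹' {z} ∩ Y ⁻¹' {y} := by
    ext; simp [and_assoc]
  have := congrArg ENNReal.toReal (h x z y)
  rw [hsets, ENNReal.toReal_mul, ENNReal.toReal_mul, mul_comm] at this
  exact this

variable [MeasurableSpace β] [MeasurableSingletonClass β]

theorem mutInf_le_mutInf_of_isMarkovChain (hX : Measurable X) (hY : Measurable Y)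
    (hZ : Measurable Z) (h : IsMarkovChain μ X Y Z) : MutInf μ X Z ≤ MutInf μ Y Z := by
  let e : (α × γ) × β ≃ (β × γ) × α :=
    { toFun := fun p => ((p.2, p.1.2), p.1.1)
      invFun := fun q => ((q.2, q.1.2), q.1.1)
      left_inv := fun _ => rfl
      right_inv := fun _ => rfl }
  have htriple : Hent μ (fun ω => ((Y ω, Z ω), X ω)) = Hent μ (fun ω => ((X ω, Z ω), Y ω)) :=
    Hent_comp_equiv μ e fun ω => ((X ω, Z ω), Y ω)
  have hmarkov := condMutInf_eq_zero_of_isMarkovChain μ hX hZ h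
  have hnonneg : 0 ≤ CondMutInf μ Y Z X := condMutInf_nonneg μ hY hZ
  simp only [CondMutInf, Hcond, MutInf] at hmarkov hnonneg ⊢
  linarith [Hent_prod_comm μ X Y, Hent_prod_comm μ X Z, Hent_prod_comm μ Y Z]

end ConditionalMutualInformation

theorem leakage_upper_bound_general
    {Ω : Type*} [MeasurableSpace Ω] (μ : Measure Ω) [IsProbabilityMeasure μ]
    {𝓜s 𝓜r 𝓓 𝓩 : Type*}
    [Fintype 𝓜s] [MeasurableSpace 𝓜s] [MeasurableSingletonClass 𝓜s]
    [Fintype 𝓜r] [MeasurableSpace 𝓜r] [MeasurableSingletonClass 𝓜r]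
    [Fintype 𝓓] [MeasurableSpace 𝓓] [MeasurableSingletonClass 𝓓]
    [Fintype 𝓩] [MeasurableSpace 𝓩] [MeasurableSingletonClass 𝓩]
    (Ms : Ω → 𝓜s) (Mr : Ω → 𝓜r) (D : Ω → 𝓓) (Z : Ω → 𝓩)
    (hMs : Measurable Ms) (hMr : Measurable Mr) (hD : Measurable D) (hZ : Measurable Z)
    -- (i) uniform secret and dummy messages, independent of each other
    (hunifR : ∀ m : 𝓜r, μ (Mr ⁻¹' {m}) = ((Fintype.card 𝓜r : ENNReal))⁻¹)
    (hindep : IndepFun Ms Mr μ)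
    -- (iv) (Ms, Mr) ⟂ Z given D
    (hCI : ∀ (a : 𝓜s × 𝓜r) (z : 𝓩) (d : 𝓓),
      μ (D ⁻¹' {d}) * μ {ω | (Ms ω, Mr ω) = a ∧ Z ω = z ∧ D ω = d}
        = μ {ω | (Ms ω, Mr ω) = a ∧ D ω = d} * μ {ω | Z ω = z ∧ D ω = d})
    -- (v) Fano-type bound for the fictitious receiver
    (ε : ℝ)
    (hFano : Hcond μ Mr (fun ω => (Ms ω, Z ω))
      ≤ Real.log 2 + ε * Real.log (Fintype.card 𝓜r)) :
    MutInf μ Ms Z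
      ≤ MutInf μ D Z - (1 - ε) * Real.log (Fintype.card 𝓜r) + Real.log 2 := by
  have hdata : MutInf μ (fun ω => (Ms ω, Mr ω)) Z ≤ MutInf μ D Z :=
    mutInf_le_mutInf_of_isMarkovChain μ (hMs.prodMk hMr) hD hZ hCI
  have hmessages : Hent μ (fun ω => (Ms ω, Mr ω)) = Hent μ Ms + log (Fintype.card 𝓜r) := by
    rw [Hent_pair_of_indepFun μ hMs hMr hindep, Hent_of_uniform μ hunifR]
  let e : (𝓜s × 𝓜r) × 𝓩 ≃ 𝓜r × 𝓜s × 𝓩 :=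
    { toFun := fun p => (p.1.2, p.1.1, p.2)
      invFun := fun q => ((q.2.1, q.1), q.2.2)
      left_inv := fun _ => rfl
      right_inv := fun _ => rfl }
  have hchain : Hent μ (fun ω => (Mr ω, Ms ω, Z ω)) = Hent μ (fun ω => ((Ms ω, Mr ω), Z ω)) :=
    Hent_comp_equiv μ e fun ω => ((Ms ω, Mr ω), Z ω)
  simp only [MutInf, Hcond] at hdata hFano ⊢
  linarith

/-- Lemma 1 of the paper: upper bound on the information leakage of the nested
wiretap code, abstracted to one block. -/
theorem leakage_upper_bound
    {Ω : Type*} [MeasurableSpace Ω] (μ : Measure Ω) [IsProbabilityMeasure μ]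
    {𝓜s 𝓜r 𝓓 𝓩 : Type*}
    [Fintype 𝓜s] [Nonempty 𝓜s] [MeasurableSpace 𝓜s] [MeasurableSingletonClass 𝓜s]
    [Fintype 𝓜r] [Nonempty 𝓜r] [MeasurableSpace 𝓜r] [MeasurableSingletonClass 𝓜r]
    [Fintype 𝓓] [Nonempty 𝓓] [MeasurableSpace 𝓓] [MeasurableSingletonClass 𝓓]
    [Fintype 𝓩] [Nonempty 𝓩] [MeasurableSpace 𝓩] [MeasurableSingletonClass 𝓩]
    (Ms : Ω → 𝓜s) (Mr : Ω → 𝓜r) (D : Ω → 𝓓) (Z : Ω → 𝓩)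
    (hMs : Measurable Ms) (hMr : Measurable Mr) (hD : Measurable D) (hZ : Measurable Z)
    -- (i) uniform secret and dummy messages, independent of each other
    (hunifS : ∀ m : 𝓜s, μ (Ms ⁻¹' {m}) = ((Fintype.card 𝓜s : ENNReal))⁻¹)
    (hunifR : ∀ m : 𝓜r, μ (Mr ⁻¹' {m}) = ((Fintype.card 𝓜r : ENNReal))⁻¹)
    (hindep : IndepFun Ms Mr μ)
    -- (ii) the codeword is a deterministic function of the messages
    (f : 𝓜s × 𝓜r → 𝓓) (hf : ∀ᵐ ω ∂μ, D ω = f (Ms ω, Mr ω))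
    -- (iii) the dummy message is systematically contained in the codeword
    (g : 𝓓 → 𝓜r) (hg : ∀ᵐ ω ∂μ, Mr ω = g (D ω))
    -- (iv) (Ms, Mr) ⟂ Z given D
    (hCI : ∀ (a : 𝓜s × 𝓜r) (z : 𝓩) (d : 𝓓),
      μ (D ⁻¹' {d}) * μ {ω | (Ms ω, Mr ω) = a ∧ Z ω = z ∧ D ω = d}
        = μ {ω | (Ms ω, Mr ω) = a ∧ D ω = d} * μ {ω | Z ω = z ∧ D ω = d})
    -- (v) Fano-type bound for the fictitious receiver
    (ε : ℝ) (hε0 : 0 ≤ ε) (hε1 : ε ≤ 1)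
    (hFano : Hcond μ Mr (fun ω => (Ms ω, Z ω))
      ≤ Real.log 2 + ε * Real.log (Fintype.card 𝓜r)) :
    MutInf μ Ms Z
      ≤ MutInf μ D Z - (1 - ε) * Real.log (Fintype.card 𝓜r) + Real.log 2 :=
  leakage_upper_bound_general μ Ms Mr D Z hMs hMr hD hZ hunifR hindep hCI ε hFano
end

section
/- Let M, X, Y, Z be random variables on a probability space taking values in finite nonempty types, with M uniformly distributed on a finite nonempty type 𝓜 and M = h(X) almost surely for some function h. Then log |𝓜| ≤ I(X; Y) − I(X; Z) + H(X | Y) + I(M; Z). -/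
/-!
Expanding the information quantities, `I(X;Y) - I(X;Z) + H(X|Y) = H(X|Z)` and
`I(M;Z) = H(M) - H(M|Z)`, while `H(M) = log |𝓜|` by uniformity. The claim thus reduces to
`H(M|Z) ≤ H(X|Z)`, which holds because `(M, Z) = (h X, Z)` almost surely and applying a function
to a random variable cannot increase its entropy (`negMulLog` is subadditive on `[0, ∞)`).
-/

open MeasureTheory ProbabilityTheory Real

namespace Real

lemma negMulLog_add_le {x y : ℝ} (hx : 0 ≤ x) (hy : 0 ≤ y) :
    negMulLog (x + y) ≤ negMulLog x + negMulLog y := by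
  have mul_log_le : ∀ {a b : ℝ}, 0 ≤ a → 0 ≤ b → a * log a ≤ a * log (a + b) := by
    intro a b ha hb
    rcases ha.eq_or_lt with rfl | ha
    · simp
    · exact mul_le_mul_of_nonneg_left (log_le_log ha (le_add_of_nonneg_right hb)) ha.le
  have hxy := mul_log_le hx hy
  have hyx := mul_log_le hy hx
  rw [add_comm y x] at hyx
  simp only [negMulLog, neg_mul]
  linarith

lemma negMulLog_sum_le {ι : Type*} (s : Finset ι) (f : ι → ℝ) (hf : ∀ i ∈ s, 0 ≤ f i) :
    negMulLog (∑ i ∈ s, f i) ≤ ∑ i ∈ s, negMulLog (f i) :=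
  Finset.le_sum_of_subadditive_on_pred negMulLog (0 ≤ ·) (by simp)
    (fun _ _ => negMulLog_add_le) (fun _ _ => add_nonneg) f hf

lemma nat_mul_negMulLog_inv (n : ℕ) : n * negMulLog (n⁻¹ : ℝ) = log n := by
  rcases n.eq_zero_or_pos with rfl | hn
  · simp
  · have hn' : (n : ℝ) ≠ 0 := by positivity
    rw [negMulLog, log_inv]
    field_simp

end Real

section Entropy

variable {Ω : Type*} [MeasurableSpace Ω] (μ : Measure Ω)

lemma Hent_congr_ae {α : Type*} [Fintype α] {W W' : Ω → α} (hWW : W =ᵐ[μ] W') :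
    Hent μ W = Hent μ W' := by
  unfold Hent
  congr! 3 with a
  exact measure_congr (hWW.preimage {a})

lemma Hent_eq_log_card_of_uniform {α : Type*} [Fintype α] {W : Ω → α}
    (hW : ∀ a, μ (W ⁻¹' {a}) = (Fintype.card α : ENNReal)⁻¹) :
    Hent μ W = log (Fintype.card α) := by
  simp only [Hent, hW, ENNReal.toReal_inv, ENNReal.toReal_natCast, Finset.sum_const,
    Finset.card_univ, nsmul_eq_mul, nat_mul_negMulLog_inv]

lemma Hent_comp_le [IsFiniteMeasure μ] {α β : Type*} [Fintype α] [Fintype β] [DecidableEq β]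
    {W : Ω → α} (hW : ∀ a, MeasurableSet (W ⁻¹' {a})) (g : α → β) :
    Hent μ (fun ω => g (W ω)) ≤ Hent μ W := by
  unfold Hent
  rw [← Finset.sum_fiberwise Finset.univ g]
  refine Finset.sum_le_sum fun b _ => ?_
  have fiber : μ ((fun ω => g (W ω)) ⁻¹' {b})
      = ∑ a ∈ Finset.univ.filter (g · = b), μ (W ⁻¹' {a}) := by
    rw [sum_measure_preimage_singleton _ fun a _ => hW a]
    congr 1
    ext ω
    simp
  rw [fiber, ENNReal.toReal_sum fun a _ => measure_ne_top μ _]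
  exact negMulLog_sum_le _ _ fun a _ => ENNReal.toReal_nonneg

lemma Hcond_comp_le [IsFiniteMeasure μ] {α β γ : Type*} [Fintype α] [Fintype β] [Fintype γ]
    {W : Ω → α} {V : Ω → γ} (hWV : ∀ p, MeasurableSet ((fun ω => (W ω, V ω)) ⁻¹' {p}))
    (g : α → β) :
    Hcond μ (fun ω => g (W ω)) V ≤ Hcond μ W V := by
  classical
  have := Hent_comp_le μ hWV (fun p : α × γ => (g p.1, p.2))
  unfold Hcond
  linarith

lemma MutInf_sub_MutInf_add_Hcond {α β γ : Type*} [Fintype α] [Fintype β] [Fintype γ]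
    (X : Ω → α) (Y : Ω → β) (Z : Ω → γ) :
    MutInf μ X Y - MutInf μ X Z + Hcond μ X Y = Hcond μ X Z := by
  unfold MutInf Hcond
  ring

lemma MutInf_eq_Hent_sub_Hcond {α β : Type*} [Fintype α] [Fintype β] (X : Ω → α) (Y : Ω → β) :
    MutInf μ X Y = Hent μ X - Hcond μ X Y := by
  unfold MutInf Hcond
  ring

end Entropy

theorem secure_rate_benchmark_general
    {Ω : Type*} [MeasurableSpace Ω] (μ : Measure Ω) [IsProbabilityMeasure μ]
    {𝓜 𝓧 𝓨 𝓩 : Type*}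
    [Fintype 𝓜]
    [Fintype 𝓧] [MeasurableSpace 𝓧] [MeasurableSingletonClass 𝓧]
    [Fintype 𝓨]
    [Fintype 𝓩] [MeasurableSpace 𝓩] [MeasurableSingletonClass 𝓩]
    (M : Ω → 𝓜) (X : Ω → 𝓧) (Y : Ω → 𝓨) (Z : Ω → 𝓩)
    (hX : Measurable X) (hZ : Measurable Z)
    (hunif : ∀ m : 𝓜, μ (M ⁻¹' {m}) = ((Fintype.card 𝓜 : ENNReal))⁻¹)
    (h : 𝓧 → 𝓜) (hh : ∀ᵐ ω ∂μ, M ω = h (X ω)) :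
    Real.log (Fintype.card 𝓜)
      ≤ MutInf μ X Y - MutInf μ X Z + Hcond μ X Y + MutInf μ M Z := by
  have hM : Hent μ M = Real.log (Fintype.card 𝓜) := Hent_eq_log_card_of_uniform μ hunif
  have hMZ : Hcond μ M Z = Hcond μ (fun ω => h (X ω)) Z := by
    unfold Hcond
    rw [Hent_congr_ae μ (hh.mono fun ω hω => by rw [hω])]
  have hXZ : Hcond μ (fun ω => h (X ω)) Z ≤ Hcond μ X Z :=
    Hcond_comp_le μ (fun p => hX.prodMk hZ (measurableSet_singleton p)) h
  rw [MutInf_sub_MutInf_add_Hcond, MutInf_eq_Hent_sub_Hcond, hM, hMZ]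
  linarith

/-- Remark 3 of the paper: for a uniform secret message `M` determined by the
codeword `X`, `log |𝓜| ≤ I(X; Y) - I(X; Z) + H(X | Y) + I(M; Z)`. -/
theorem secure_rate_benchmark
    {Ω : Type*} [MeasurableSpace Ω] (μ : Measure Ω) [IsProbabilityMeasure μ]
    {𝓜 𝓧 𝓨 𝓩 : Type*}
    [Fintype 𝓜] [Nonempty 𝓜] [MeasurableSpace 𝓜] [MeasurableSingletonClass 𝓜]
    [Fintype 𝓧] [Nonempty 𝓧] [MeasurableSpace 𝓧] [MeasurableSingletonClass 𝓧]
    [Fintype 𝓨] [Nonempty 𝓨] [MeasurableSpace 𝓨] [MeasurableSingletonClass 𝓨]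
    [Fintype 𝓩] [Nonempty 𝓩] [MeasurableSpace 𝓩] [MeasurableSingletonClass 𝓩]
    (M : Ω → 𝓜) (X : Ω → 𝓧) (Y : Ω → 𝓨) (Z : Ω → 𝓩)
    (hM : Measurable M) (hX : Measurable X) (hY : Measurable Y) (hZ : Measurable Z)
    (hunif : ∀ m : 𝓜, μ (M ⁻¹' {m}) = ((Fintype.card 𝓜 : ENNReal))⁻¹)
    (h : 𝓧 → 𝓜) (hh : ∀ᵐ ω ∂μ, M ω = h (X ω)) :
    Real.log (Fintype.card 𝓜)
      ≤ MutInf μ X Y - MutInf μ X Z + Hcond μ X Y + MutInf μ M Z :=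
  secure_rate_benchmark_general μ M X Y Z hX hZ hunif h hh
end

section
/- Let n and ν be natural numbers with 0 < ν < n, let g : ℕ → ℂ, let (W(t))_{t ∈ ℤ} be an independent family of ℂ-valued random variables on a probability space, and let x : ℤ → ℂ be a deterministic sequence with x(s) = 0 whenever s = n·t − r for some t ∈ ℤ and r ∈ {0, 1, …, ν − 1}. Define Y(t) = ∑_{r=0}^{ν} g(r)·x(t − r) + W(t) for all t ∈ ℤ, and for each j ∈ ℤ define the j-th output block Y_j = (Y(n(j−1)+1), …, Y(nj)) ∈ ℂ^n. Then: (i) the family of random vectors (Y_j)_{j ∈ ℤ} is independent; and (ii) for each j, the law of Y_j is a function only of the restriction of x to the block {n(j−1)+1, …, nj} and of the laws of (W(n(j−1)+1), …, W(nj)); that is, if x' is another sequence satisfying the same zero-padding condition and agreeing with x on block j, then the corresponding output block Y'_j has the same law as Y_j. -/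
/-!
The noise samples feeding distinct output blocks are disjoint subfamilies of the independent
family `W`, so the σ-algebras they generate are independent; each output block is a
deterministic translate of its noise block, hence the blocks are independent. The zero padding
makes the channel memory, which reaches back `ν` symbols, see only zeros before the start of a
block, so the `j`-th output block is the same random vector for any two padded inputs that agree
on block `j`.
-/

open MeasureTheory ProbabilityTheory Function

/-- Noisy ISI channel output `Y(t) = ∑_{r=0}^{ν} g(r)·x(t-r) + W(t)`. -/
noncomputable def noisyOut {Ω : Type*} (ν : ℕ) (g : ℕ → ℂ) (x : ℤ → ℂ)
    (W : ℤ → Ω → ℂ) (t : ℤ) (ω : Ω) : ℂ :=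
  (∑ r ∈ Finset.range (ν + 1), g r * x (t - (r : ℤ))) + W t ω

/-- The `j`-th length-`n` output block `Y_j = (Y(n(j-1)+1), …, Y(nj))`. -/
noncomputable def blockOut {Ω : Type*} (n ν : ℕ) (g : ℕ → ℂ) (x : ℤ → ℂ)
    (W : ℤ → Ω → ℂ) (j : ℤ) (ω : Ω) : Fin n → ℂ :=
  fun i => noisyOut ν g x W ((n : ℤ) * (j - 1) + 1 + (i : ℤ)) ω

namespace ProbabilityTheory

variable {Ω ι κ : Type*} {mΩ : MeasurableSpace Ω} {μ : Measure Ω}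

theorem iIndep_biSup_of_pairwise_disjoint {m : κ → MeasurableSpace Ω}
    (h_le : ∀ t, m t ≤ mΩ) (h_indep : iIndep m μ) {B : ι → Set κ}
    (hB : Pairwise (Disjoint on B)) :
    iIndep (fun j => ⨆ t ∈ B j, m t) μ := by
  classical
  have := h_indep.isProbabilityMeasure
  rw [iIndep_iff]
  intro s
  induction s using Finset.induction_on with
  | empty => intro f _; simp
  | @insert a s ha ih =>
    intro f hf
    set C := ⋃ i ∈ (s : Set ι), B i
    have hdisj : Disjoint (B a) C :=
      Set.disjoint_iUnion₂_right.2 fun i hi => hB (ne_of_mem_of_not_mem hi ha).symm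
    have hle : ∀ i ∈ s, (⨆ t ∈ B i, m t) ≤ ⨆ t ∈ C, m t := fun i hi =>
      biSup_mono fun t ht => Set.mem_biUnion hi ht
    have hC : MeasurableSet[⨆ t ∈ C, m t] (⋂ i ∈ s, f i) :=
      .biInter s.countable_toSet fun i hi => hle i hi _ (hf i (Finset.mem_insert_of_mem hi))
    rw [Finset.set_biInter_insert, Finset.prod_insert ha,
      (Indep_iff _ _ _).1 (indep_iSup_of_disjoint h_le h_indep hdisj) _ _
        (hf a (Finset.mem_insert_self a s)) hC,
      ih fun i hi => hf i (Finset.mem_insert_of_mem hi)]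

theorem iIndepFun.blocks_of_pairwise_disjoint_range {β ι' : Type*} [MeasurableSpace β]
    {X : κ → Ω → β} (hX : ∀ t, Measurable (X t)) (h_indep : iIndepFun X μ)
    {τ : ι → ι' → κ} (hτ : Pairwise (Disjoint on fun j => Set.range (τ j))) :
    iIndepFun (fun j ω i => X (τ j i) ω) μ := by
  refine iIndep_of_iIndep_of_le (iIndep_biSup_of_pairwise_disjoint
    (fun t => (hX t).comap_le) h_indep.iIndep hτ) fun j => ?_
  simp_rw [iSup_range, MeasurableSpace.pi, MeasurableSpace.comap_iSup,
    MeasurableSpace.comap_comp]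
  rfl

end ProbabilityTheory

def blockIndex (n : ℕ) (j : ℤ) (i : Fin n) : ℤ := n * (j - 1) + 1 + i

theorem pairwise_disjoint_range_blockIndex (n : ℕ) :
    Pairwise (Disjoint on fun j => Set.range (blockIndex n j)) := by
  intro j j' hjj'
  rw [onFun, Set.disjoint_left]
  rintro _ ⟨i, rfl⟩ ⟨i', heq⟩
  have hi := i.isLt
  have hi' := i'.isLt
  unfold blockIndex at heq
  rcases hjj'.lt_or_gt with h | h <;> nlinarith

def ZeroPadded (n ν : ℕ) (x : ℤ → ℂ) : Prop :=
  ∀ (t : ℤ) (r : ℕ), r < ν → x (n * t - r) = 0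

theorem noisyOut_congr_input {Ω : Type*} {ν : ℕ} {g : ℕ → ℂ} {x x' : ℤ → ℂ} {W : ℤ → Ω → ℂ}
    {t : ℤ} (h : ∀ r ≤ ν, x (t - r) = x' (t - r)) : noisyOut ν g x W t = noisyOut ν g x' W t := by
  funext ω
  unfold noisyOut
  congr 1
  exact Finset.sum_congr rfl fun r hr => by rw [h r (Finset.mem_range_succ_iff.1 hr)]

theorem ZeroPadded.eq_of_eqOn_block {n ν : ℕ} {x x' : ℤ → ℂ} (hx : ZeroPadded n ν x)
    (hx' : ZeroPadded n ν x') {j : ℤ}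
    (h : ∀ s : ℤ, (n : ℤ) * (j - 1) + 1 ≤ s → s ≤ (n : ℤ) * j → x s = x' s)
    {s : ℤ} (hs₁ : (n : ℤ) * (j - 1) - ν < s) (hs₂ : s ≤ n * j) : x s = x' s := by
  rcases le_or_gt s (n * (j - 1)) with hs | hs
  · obtain ⟨r, rfl⟩ : ∃ r : ℕ, s = n * (j - 1) - r := ⟨(n * (j - 1) - s).toNat, by omega⟩
    rw [hx _ _ (by omega), hx' _ _ (by omega)]
  · exact h s hs hs₂

theorem blockOut_eq_of_eqOn_block {Ω : Type*} {n ν : ℕ} {g : ℕ → ℂ} {W : ℤ → Ω → ℂ}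
    {x x' : ℤ → ℂ} (hx : ZeroPadded n ν x) (hx' : ZeroPadded n ν x') {j : ℤ}
    (h : ∀ s : ℤ, (n : ℤ) * (j - 1) + 1 ≤ s → s ≤ (n : ℤ) * j → x s = x' s) :
    blockOut n ν g x W j = blockOut n ν g x' W j := by
  funext ω i
  have hi := i.isLt
  have hnj : (n : ℤ) * j = n * (j - 1) + n := by ring
  exact congrFun
    (noisyOut_congr_input fun r hr => hx.eq_of_eqOn_block hx' h (by omega) (by omega)) ω

theorem blockOut_iIndep_and_law_local_general
    {Ω : Type*} [MeasurableSpace Ω] (μ : Measure Ω)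
    (n ν : ℕ) (g : ℕ → ℂ)
    (W : ℤ → Ω → ℂ) (hWmeas : ∀ t : ℤ, Measurable (W t))
    (hWindep : iIndepFun W μ)
    (x : ℤ → ℂ)
    (hx : ∀ (t : ℤ) (r : ℕ), r < ν → x ((n : ℤ) * t - (r : ℤ)) = 0) :
    iIndepFun (blockOut n ν g x W) μ
    ∧ ∀ (x' : ℤ → ℂ),
        (∀ (t : ℤ) (r : ℕ), r < ν → x' ((n : ℤ) * t - (r : ℤ)) = 0) →
        ∀ j : ℤ,
          (∀ s : ℤ, (n : ℤ) * (j - 1) + 1 ≤ s → s ≤ (n : ℤ) * j → x s = x' s) →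
          Measure.map (blockOut n ν g x W j) μ
            = Measure.map (blockOut n ν g x' W j) μ := by
  refine ⟨?_, fun x' hx' j hagree => by rw [blockOut_eq_of_eqOn_block hx hx' hagree]⟩
  have hnoise :=
    hWindep.blocks_of_pairwise_disjoint_range hWmeas (pairwise_disjoint_range_blockIndex n)
  exact hnoise.comp
    (fun j v i => (∑ r ∈ Finset.range (ν + 1), g r * x (blockIndex n j i - r)) + v i)
    fun j => by fun_prop

/-- Appendix B of the paper (equations (20)–(21)): with independent noise and an
input zero-padded on the last `ν` positions of every length-`n` block, (i) the
length-`n` output blocks form an independent family, and (ii) the law of each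
output block depends only on the input symbols of that block: replacing the
input by any other zero-padded sequence agreeing on block `j` leaves the law of
the `j`-th output block unchanged. -/
theorem blockOut_iIndep_and_law_local
    {Ω : Type*} [MeasurableSpace Ω] (μ : Measure Ω) [IsProbabilityMeasure μ]
    (n ν : ℕ) (hν : 0 < ν) (hn : ν < n) (g : ℕ → ℂ)
    (W : ℤ → Ω → ℂ) (hWmeas : ∀ t : ℤ, Measurable (W t))
    (hWindep : iIndepFun W μ)
    (x : ℤ → ℂ)
    (hx : ∀ (t : ℤ) (r : ℕ), r < ν → x ((n : ℤ) * t - (r : ℤ)) = 0) :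
    iIndepFun (blockOut n ν g x W) μ
    ∧ ∀ (x' : ℤ → ℂ),
        (∀ (t : ℤ) (r : ℕ), r < ν → x' ((n : ℤ) * t - (r : ℤ)) = 0) →
        ∀ j : ℤ,
          (∀ s : ℤ, (n : ℤ) * (j - 1) + 1 ≤ s → s ≤ (n : ℤ) * j → x s = x' s) →
          Measure.map (blockOut n ν g x W j) μ
            = Measure.map (blockOut n ν g x' W j) μ :=
  blockOut_iIndep_and_law_local_general μ n ν g W hWmeas hWindep x hx
end
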